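/- Let A = {a_1, …, a_{d+1}} ⊂ ℤ^d and let Ã be the (d+1)×(d+1) matrix whose j-th column is (1, a_j) (a first row of ones, followed by the coordinates of the points). Assume Ã is invertible. Let C be a real d×(d+1) matrix and consider the Laurent polynomial system f_1(X) = ⋯ = f_d(X) = 0 where f_i(X) = Σ_{j=1}^{d+1} C_{ij} X^{a_j}. Then this system has a non-degenerate solution in the positive orthant (ℝ_{>0})^d if and only if C is oriented; moreover, when C is oriented, the system has exactly one solution in the positive orthant. -/

import Mathlib

/-!
Write `w` for the vector of signed maximal minors `(-1)^j minor(C, j)`. Laplace expansion gives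
`C w = 0` and `det [z; C] = z ⬝ w`, so when `w ≠ 0` the kernel of `C` is the line spanned by `w`.
Since `F v = C Y(v)` for the monomial vector `Y(v)_j = v^{a_j}`, positive solutions come from
positive vectors of `ker C`, and such a vector exists together with `w ≠ 0` exactly when `C` is
oriented. Taking logarithms, `s • Y(v) = g` is the linear system `Ãᵀ (log s, log v) = log g`, so
every open ray in the positive orthant contains exactly one `Y(v)`: this gives existence and
uniqueness. Finally the Jacobian is `C diag(Y) E diag(v)⁻¹` with `E_jr = a_j r`, and the block
triangular product `[z; C] diag(Y) Ãᵀ` gives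
`det [z; C] · ∏ Y · det Ã = (z ⬝ Y) · det (C diag(Y) E)`; taking `z = Y` and `z = w` shows that
the Jacobian is invertible iff `w ≠ 0`.
-/

open Matrix

noncomputable section

/-- The determinant of the square matrix obtained from a `d × (d+1)` matrix `M`
by deleting its `i`-th column. -/
def colMinor {d : ℕ} (M : Matrix (Fin d) (Fin (d + 1)) ℝ) (i : Fin (d + 1)) : ℝ :=
  (M.submatrix id i.succAbove).det

/-- A `d × (d+1)` real matrix is *oriented* if all the values `(-1)^i * minor(M, i)`
are nonzero and have the same sign. -/
def IsOriented {d : ℕ} (M : Matrix (Fin d) (Fin (d + 1)) ℝ) : Prop :=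
  (∀ i : Fin (d + 1), 0 < (-1 : ℝ) ^ (i : ℕ) * colMinor M i) ∨
  (∀ i : Fin (d + 1), (-1 : ℝ) ^ (i : ℕ) * colMinor M i < 0)

section SignedMinors

variable {d : ℕ} (C : Matrix (Fin d) (Fin (d + 1)) ℝ)

def signedMinors : Fin (d + 1) → ℝ := fun j => (-1 : ℝ) ^ (j : ℕ) * colMinor C j

theorem det_vecCons_eq_dotProduct_signedMinors (z : Fin (d + 1) → ℝ) :
    (of (vecCons z (of.symm C))).det = z ⬝ᵥ signedMinors C := by
  rw [det_succ_row_zero]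
  refine Finset.sum_congr rfl fun j _ => ?_
  rw [signedMinors, colMinor, of_apply, cons_val_zero,
    show (of (vecCons z (of.symm C))).submatrix Fin.succ j.succAbove =
      C.submatrix id j.succAbove from rfl]
  ring

theorem mulVec_signedMinors : C *ᵥ signedMinors C = 0 := by
  funext i
  change (fun j => C i j) ⬝ᵥ signedMinors C = 0
  rw [← det_vecCons_eq_dotProduct_signedMinors]
  exact det_zero_of_row_eq (Fin.succ_ne_zero i).symm rfl

variable {C}

theorem exists_eq_smul_signedMinors (hw : signedMinors C ≠ 0) {z : Fin (d + 1) → ℝ}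
    (hz : C *ᵥ z = 0) : ∃ t : ℝ, z = t • signedMinors C := by
  set w := signedMinors C
  have hww : w ⬝ᵥ w ≠ 0 := fun h => hw (dotProduct_self_eq_zero.1 h)
  refine ⟨(w ⬝ᵥ z) / (w ⬝ᵥ w), sub_eq_zero.1 ?_⟩
  -- `z - t • w` is orthogonal to `w` and lies in `ker C`, and `[w; C]` is invertible.
  refine eq_zero_of_mulVec_eq_zero (M := of (vecCons w (of.symm C))) ?_ ?_
  · rwa [det_vecCons_eq_dotProduct_signedMinors]
  · rw [cons_mulVec, Equiv.apply_symm_apply, mulVec_sub, mulVec_smul, hz, mulVec_signedMinors,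
      dotProduct_sub, dotProduct_smul, smul_eq_mul, div_mul_cancel₀ _ hww]
    simp

theorem isOriented_iff_exists_pos_mulVec_eq_zero :
    IsOriented C ↔ signedMinors C ≠ 0 ∧ ∃ y : Fin (d + 1) → ℝ, (∀ j, 0 < y j) ∧ C *ᵥ y = 0 := by
  constructor
  · rintro (h | h)
    · exact ⟨fun h0 => (h 0).ne' (congrFun h0 0), signedMinors C, h, mulVec_signedMinors C⟩
    · refine ⟨fun h0 => (h 0).ne (congrFun h0 0), -signedMinors C, fun j => neg_pos.2 (h j), ?_⟩
      rw [mulVec_neg, mulVec_signedMinors, neg_zero]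
  · rintro ⟨hw, y, hy, hCy⟩
    obtain ⟨t, rfl⟩ := exists_eq_smul_signedMinors hw hCy
    rcases lt_trichotomy t 0 with ht | rfl | ht
    · exact .inr fun j => neg_of_mul_pos_right (hy j) ht.le
    · simpa using hy 0
    · exact .inl fun j => pos_of_mul_pos_right (hy j) ht.le

theorem exists_pos_smul_of_mulVec_eq_zero (hw : signedMinors C ≠ 0) {y z : Fin (d + 1) → ℝ}
    (hy : ∀ j, 0 < y j) (hz : ∀ j, 0 < z j) (hCy : C *ᵥ y = 0) (hCz : C *ᵥ z = 0) :
    ∃ ρ : ℝ, 0 < ρ ∧ z = ρ • y := by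
  obtain ⟨s, rfl⟩ := exists_eq_smul_signedMinors hw hCy
  obtain ⟨t, rfl⟩ := exists_eq_smul_signedMinors hw hCz
  have hs : s ≠ 0 := by
    rintro rfl
    simpa using hy 0
  have hz0 : 0 < t / s * (s * signedMinors C 0) := by
    rw [← mul_assoc, div_mul_cancel₀ _ hs]
    exact hz 0
  exact ⟨t / s, pos_of_mul_pos_left hz0 (hy 0).le, by rw [smul_smul, div_mul_cancel₀ _ hs]⟩

end SignedMinors

section Monomial

variable {ι σ : Type*} [Fintype σ]

def monomialVec (a : ι → σ → ℤ) (x : σ → ℝ) : ι → ℝ := fun j => ∏ r, x r ^ a j r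

def exponentMatrix (a : ι → σ → ℤ) : Matrix ι σ ℝ := of fun j r => (a j r : ℝ)

theorem monomialVec_pos (a : ι → σ → ℤ) {x : σ → ℝ} (hx : ∀ r, 0 < x r) (j : ι) :
    0 < monomialVec a x j :=
  Finset.prod_pos fun r _ => zpow_pos (hx r) _

theorem hasFDerivAt_prod_zpow [DecidableEq σ] (n : σ → ℤ) {v : σ → ℝ} (hv : ∀ r, v r ≠ 0) :
    HasFDerivAt (fun x : σ → ℝ => ∏ r, x r ^ n r)
      (∑ r, ((∏ s, v s ^ n s) * n r / v r) •
        ContinuousLinearMap.proj (R := ℝ) (φ := fun _ : σ => ℝ) r) v := by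
  refine (HasFDerivAt.finsetProd fun r _ =>
    (hasDerivAt_zpow (n r) (v r) (.inl (hv r))).comp_hasFDerivAt v
      (hasFDerivAt_apply (𝕜 := ℝ) r v)).congr_fderiv ?_
  refine Finset.sum_congr rfl fun r _ => ?_
  rw [smul_smul, ← Finset.mul_prod_erase _ _ (Finset.mem_univ r), zpow_sub_one₀ (hv r)]
  simp only [Function.comp_apply]
  congr 1
  ring

variable [Fintype ι] [DecidableEq ι] [DecidableEq σ]

theorem hasFDerivAt_monomialVec (a : ι → σ → ℤ) {v : σ → ℝ} (hv : ∀ r, v r ≠ 0) :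
    HasFDerivAt (monomialVec a)
      (toLin' (diagonal (monomialVec a v) * exponentMatrix a *
        diagonal fun r => (v r)⁻¹)).toContinuousLinearMap v := by
  refine (hasFDerivAt_pi.2 fun j => hasFDerivAt_prod_zpow (a j) hv).congr_fderiv ?_
  ext u j
  simp only [LinearMap.coe_toContinuousLinearMap', toLin'_apply, mulVec, dotProduct,
    mul_diagonal, diagonal_mul, exponentMatrix, of_apply, ContinuousLinearMap.pi_apply,
    _root_.sum_apply, _root_.smul_apply, ContinuousLinearMap.proj_apply,
    smul_eq_mul, monomialVec]
  refine Finset.sum_congr rfl fun r _ => ?_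
  ring

theorem det_fderiv_mulVec_monomialVec (C : Matrix σ ι ℝ) (a : ι → σ → ℤ) {v : σ → ℝ}
    (hv : ∀ r, v r ≠ 0) :
    (fderiv ℝ (fun x => C *ᵥ monomialVec a x) v).det =
      (C * diagonal (monomialVec a v) * exponentMatrix a).det * ∏ r, (v r)⁻¹ := by
  have hF : HasFDerivAt (fun x => C *ᵥ monomialVec a x) ((toLin' C).toContinuousLinearMap.comp
      (toLin' (diagonal (monomialVec a v) * exponentMatrix a *
        diagonal fun r => (v r)⁻¹)).toContinuousLinearMap) v :=
    (toLin' C).toContinuousLinearMap.hasFDerivAt.comp v (hasFDerivAt_monomialVec a hv)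
  rw [hF.fderiv]
  change LinearMap.det ((toLin' C).comp (toLin' _)) = _
  rw [← toLin'_mul, LinearMap.det_toLin', ← Matrix.mul_assoc, ← Matrix.mul_assoc, det_mul,
    det_diagonal]

end Monomial

section PositiveOrthant

variable {d : ℕ} (a : Fin (d + 1) → Fin d → ℤ)

def liftedExponents : Matrix (Fin (d + 1)) (Fin (d + 1)) ℝ :=
  Matrix.of (Fin.cons (fun _ => (1 : ℝ)) (fun r j => (a j r : ℝ)))

theorem log_mul_monomialVec {s : ℝ} (hs : 0 < s) {v : Fin d → ℝ} (hv : ∀ r, 0 < v r)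
    (j : Fin (d + 1)) :
    Real.log (s * monomialVec a v j) =
      ((liftedExponents a)ᵀ *ᵥ Fin.cons (Real.log s) fun r => Real.log (v r)) j := by
  rw [Real.log_mul hs.ne' (monomialVec_pos a hv j).ne', monomialVec,
    Real.log_prod fun r _ => (zpow_pos (hv r) _).ne']
  simp only [mulVec, dotProduct, Fin.sum_univ_succ, transpose_apply, liftedExponents, of_apply,
    Fin.cons_zero, Fin.cons_succ, one_mul, Real.log_zpow]

variable {a}

theorem exists_monomialVec_eq_smul (hA : IsUnit (liftedExponents a).det)
    {g : Fin (d + 1) → ℝ} (hg : ∀ j, 0 < g j) :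
    ∃ v : Fin d → ℝ, (∀ r, 0 < v r) ∧ ∃ s : ℝ, 0 < s ∧ monomialVec a v = s • g := by
  set u := (liftedExponents a)ᵀ⁻¹ *ᵥ fun j => Real.log (g j)
  have hu : (liftedExponents a)ᵀ *ᵥ u = fun j => Real.log (g j) := by
    rw [mulVec_mulVec, mul_nonsing_inv _ (by rwa [det_transpose]), one_mulVec]
  refine ⟨fun r => Real.exp (u r.succ), fun r => Real.exp_pos _, Real.exp (-u 0), Real.exp_pos _,
    funext fun j => ?_⟩
  have hlog := log_mul_monomialVec a (Real.exp_pos (u 0)) (fun r => Real.exp_pos (u r.succ)) j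
  simp only [Real.log_exp] at hlog
  rw [show (Fin.cons (u 0) fun r => u r.succ : Fin (d + 1) → ℝ) = u from Fin.cons_self_tail u,
    hu] at hlog
  have hmul := Real.log_injOn_pos
    (mul_pos (Real.exp_pos _) (monomialVec_pos a (fun r => Real.exp_pos _) j)) (hg j) hlog
  rw [Pi.smul_apply, smul_eq_mul, ← hmul, ← mul_assoc, ← Real.exp_add, neg_add_cancel,
    Real.exp_zero, one_mul]

theorem eq_of_monomialVec_eq_smul (hA : IsUnit (liftedExponents a).det) {v w : Fin d → ℝ}
    (hv : ∀ r, 0 < v r) (hw : ∀ r, 0 < w r) {ρ : ℝ} (hρ : 0 < ρ)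
    (h : monomialVec a w = ρ • monomialVec a v) : w = v := by
  have hlog : (liftedExponents a)ᵀ *ᵥ Fin.cons (Real.log 1) (fun r => Real.log (w r)) =
      (liftedExponents a)ᵀ *ᵥ Fin.cons (Real.log ρ) (fun r => Real.log (v r)) := by
    funext j
    rw [← log_mul_monomialVec a one_pos hw, ← log_mul_monomialVec a hρ hv, one_mul, h]
    rfl
  have hinj := (mulVec_injective_iff_isUnit (A := (liftedExponents a)ᵀ)).2
    ((isUnit_iff_isUnit_det _).2 (by rwa [det_transpose]))
  obtain ⟨-, hlog⟩ := Fin.cons_inj.1 (hinj hlog)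
  exact funext fun r => Real.log_injOn_pos (hw r) (hv r) (congrFun hlog r)

end PositiveOrthant

theorem det_vecCons_mul_of_vecCons {R : Type*} [CommRing R] {d : ℕ}
    (C : Matrix (Fin d) (Fin (d + 1)) R) (z y : Fin (d + 1) → R)
    (N : Matrix (Fin (d + 1)) (Fin d) R) (hy : C *ᵥ y = 0) :
    (of (vecCons z (of.symm C)) * of fun j => vecCons (y j) (N j)).det =
      (z ⬝ᵥ y) * (C * N).det := by
  have hcol : ∀ i : Fin d,
      (of (vecCons z (of.symm C)) * of fun j => vecCons (y j) (N j)) i.succ 0 = 0 :=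
    fun i => congrFun hy i
  rw [det_succ_column_zero, Fin.sum_univ_succ]
  simp only [hcol, mul_zero, zero_mul, Finset.sum_const_zero, add_zero, Fin.val_zero, pow_zero,
    one_mul, Fin.succAbove_zero]
  rfl

section Jacobian

variable {d : ℕ} {C : Matrix (Fin d) (Fin (d + 1)) ℝ} {a : Fin (d + 1) → Fin d → ℤ}

theorem det_vecCons_mul_det_liftedExponents {y : Fin (d + 1) → ℝ} (hCy : C *ᵥ y = 0)
    (z : Fin (d + 1) → ℝ) :
    (of (vecCons z (of.symm C))).det * ((∏ j, y j) * (liftedExponents a).det) =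
      (z ⬝ᵥ y) * (C * diagonal y * exponentMatrix a).det := by
  have hcols : (of fun j => vecCons (y j) ((diagonal y * exponentMatrix a) j)) =
      diagonal y * (liftedExponents a)ᵀ := by
    ext j k
    refine Fin.cases ?_ (fun r => ?_) k <;>
      simp [diagonal_mul, liftedExponents, exponentMatrix]
  have h := det_vecCons_mul_of_vecCons C z y (diagonal y * exponentMatrix a) hCy
  rwa [hcols, det_mul, det_mul, det_diagonal, det_transpose, ← Matrix.mul_assoc] at h

theorem det_mul_diagonal_exponentMatrix_ne_zero_iff (hA : IsUnit (liftedExponents a).det)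
    {y : Fin (d + 1) → ℝ} (hy : ∀ j, y j ≠ 0) (hCy : C *ᵥ y = 0) :
    (C * diagonal y * exponentMatrix a).det ≠ 0 ↔ signedMinors C ≠ 0 := by
  have key := det_vecCons_mul_det_liftedExponents (a := a) hCy
  constructor
  · intro hK hw
    have hyy : y ⬝ᵥ y ≠ 0 := fun h => hy 0 (congrFun (dotProduct_self_eq_zero.1 h) 0)
    have := key y
    rw [det_vecCons_eq_dotProduct_signedMinors, hw, dotProduct_zero, zero_mul] at this
    exact mul_ne_zero hyy hK this.symm
  · intro hw hK
    have := key (signedMinors C)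
    rw [det_vecCons_eq_dotProduct_signedMinors, hK, mul_zero] at this
    exact mul_ne_zero (fun h => hw (dotProduct_self_eq_zero.1 h))
      (mul_ne_zero (Finset.prod_ne_zero_iff.2 fun j _ => hy j) hA.ne_zero) this

end Jacobian

theorem stmt2_general (d : ℕ) (a : Fin (d + 1) → Fin d → ℤ)
    (Atilde : Matrix (Fin (d + 1)) (Fin (d + 1)) ℝ)
    (hAtilde : Atilde = Matrix.of (Fin.cons (fun _ => (1 : ℝ)) (fun r j => (a j r : ℝ))))
    (hA : IsUnit Atilde.det)
    (C : Matrix (Fin d) (Fin (d + 1)) ℝ)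
    (F : (Fin d → ℝ) → (Fin d → ℝ))
    (hF : ∀ x i, F x i = ∑ j, C i j * ∏ r, x r ^ a j r) :
    ((∃ v : Fin d → ℝ, (∀ r, 0 < v r) ∧ F v = 0 ∧ (fderiv ℝ F v).det ≠ 0) ↔ IsOriented C)
    ∧ (IsOriented C → ∃! v : Fin d → ℝ, (∀ r, 0 < v r) ∧ F v = 0) := by
  subst hAtilde
  obtain rfl : F = fun x => C *ᵥ monomialVec a x := funext fun x => funext (hF x)
  have jacobian_ne_zero_iff : ∀ v : Fin d → ℝ, (∀ r, 0 < v r) → C *ᵥ monomialVec a v = 0 →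
      ((fderiv ℝ (fun x => C *ᵥ monomialVec a x) v).det ≠ 0 ↔ signedMinors C ≠ 0) := by
    intro v hv hCv
    rw [det_fderiv_mulVec_monomialVec C a fun r => (hv r).ne', mul_ne_zero_iff,
      and_iff_left (Finset.prod_ne_zero_iff.2 fun r _ => inv_ne_zero (hv r).ne')]
    exact det_mul_diagonal_exponentMatrix_ne_zero_iff hA (fun j => (monomialVec_pos a hv j).ne')
      hCv
  have exists_solution :
      IsOriented C → ∃ v : Fin d → ℝ, (∀ r, 0 < v r) ∧ C *ᵥ monomialVec a v = 0 := by
    rw [isOriented_iff_exists_pos_mulVec_eq_zero]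
    rintro ⟨-, y, hy, hCy⟩
    obtain ⟨v, hv, s, -, hvy⟩ := exists_monomialVec_eq_smul hA hy
    exact ⟨v, hv, by rw [hvy, mulVec_smul, hCy, smul_zero]⟩
  refine ⟨⟨fun ⟨v, hv, hCv, hJ⟩ => ?_, fun hC => ?_⟩, fun hC => ?_⟩
  · exact isOriented_iff_exists_pos_mulVec_eq_zero.2
      ⟨(jacobian_ne_zero_iff v hv hCv).1 hJ, _, monomialVec_pos a hv, hCv⟩
  · obtain ⟨v, hv, hCv⟩ := exists_solution hC
    exact ⟨v, hv, hCv, (jacobian_ne_zero_iff v hv hCv).2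
      (isOriented_iff_exists_pos_mulVec_eq_zero.1 hC).1⟩
  · obtain ⟨v, hv, hCv⟩ := exists_solution hC
    refine ⟨v, ⟨hv, hCv⟩, fun w ⟨hw, hCw⟩ => ?_⟩
    obtain ⟨ρ, hρ, hwv⟩ := exists_pos_smul_of_mulVec_eq_zero
      (isOriented_iff_exists_pos_mulVec_eq_zero.1 hC).1 (monomialVec_pos a hv)
      (monomialVec_pos a hw) hCv hCw
    exact eq_of_monomialVec_eq_smul hA hv hw hρ hwv

theorem stmt2 (d : ℕ) (hd : 1 ≤ d) (a : Fin (d + 1) → Fin d → ℤ)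
    (Atilde : Matrix (Fin (d + 1)) (Fin (d + 1)) ℝ)
    (hAtilde : Atilde = Matrix.of (Fin.cons (fun _ => (1 : ℝ)) (fun r j => (a j r : ℝ))))
    (hA : IsUnit Atilde.det)
    (C : Matrix (Fin d) (Fin (d + 1)) ℝ)
    (F : (Fin d → ℝ) → (Fin d → ℝ))
    (hF : ∀ x i, F x i = ∑ j, C i j * ∏ r, x r ^ a j r) :
    ((∃ v : Fin d → ℝ, (∀ r, 0 < v r) ∧ F v = 0 ∧ (fderiv ℝ F v).det ≠ 0) ↔ IsOriented C)
    ∧ (IsOriented C → ∃! v : Fin d → ℝ, (∀ r, 0 < v r) ∧ F v = 0) :=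
  stmt2_general d a Atilde hAtilde hA C F hF
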